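/- For even n ≥ 4, (0,0,1) ∈ Λ_{2^{n-2}}(X_n, Y_n, Z_n): the projection onto V' = Span{|0⟩⊗|j_1,...,j_{n-1}⟩ : Hamming weight of (j_1,...,j_{n-1}) even} has rank 2^{n-2} and satisfies P X_n P = P Y_n P = 0, P Z_n P = P. -/

import Mathlib

open Matrix Finset Complex

noncomputable def sigmaX : Matrix (Fin 2) (Fin 2) ℂ := !![0, 1; 1, 0]
noncomputable def sigmaY : Matrix (Fin 2) (Fin 2) ℂ := !![0, -Complex.I; Complex.I, 0]
noncomputable def sigmaZ : Matrix (Fin 2) (Fin 2) ℂ := !![1, 0; 0, -1]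

/-- `n`-fold Kronecker (tensor) power of a `2 × 2` matrix, acting on `ℂ^{2^n}`
indexed by bit strings. -/
noncomputable def tpow (A : Matrix (Fin 2) (Fin 2) ℂ) (n : ℕ) :
    Matrix (Fin n → Fin 2) (Fin n → Fin 2) ℂ :=
  Matrix.of fun j k => ∏ i, A (j i) (k i)

/-- The joint rank-`k` numerical range of three matrices: triples `(a₁,a₂,a₃)` such that
`P Aⱼ P = aⱼ P` for some rank-`k` orthogonal projection `P`. -/
def jointRank3 {ι : Type*} [Fintype ι] [DecidableEq ι] (k : ℕ)
    (A B C : Matrix ι ι ℂ) : Set (ℂ × ℂ × ℂ) :=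
  {t | ∃ P : Matrix ι ι ℂ, P.IsHermitian ∧ P * P = P ∧ P.rank = k ∧
    P * A * P = t.1 • P ∧ P * B * P = t.2.1 • P ∧ P * C * P = t.2.2 • P}

/-- Hamming weight: the number of indices `i` with `j i = 1`. -/
def hammingWt {n : ℕ} (j : Fin n → Fin 2) : ℕ :=
  (Finset.univ.filter fun i => j i = 1).card

/-!
`P` is the diagonal `0/1` matrix selecting the bit strings with first bit `0` and even weight.
Every entry of `X_n` or `Y_n` between two such strings contains the factor `σ(0,0) = 0`, so both
compressions vanish, while `Z_n` is diagonal with entries `(-1)^weight`, equal to `1` on the range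
of `P`. Dropping the first bit, and then the second bit (which is fixed by parity), identifies the
selected strings with all strings of length `n - 2`.
-/

namespace Matrix

variable {ι K : Type*} [DecidableEq ι]

noncomputable def coordProj [Semiring K] (S : Set ι) : Matrix ι ι K :=
  diagonal (S.indicator 1)

theorem coordProj_isHermitian [Semiring K] [StarRing K] (S : Set ι) :
    (coordProj S : Matrix ι ι K).IsHermitian := by
  rw [IsHermitian, coordProj, diagonal_conjTranspose]
  congr 1
  ext i
  by_cases hi : i ∈ S <;> simp [hi]

variable [Fintype ι]

theorem coordProj_mul_self [Semiring K] (S : Set ι) :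
    (coordProj S : Matrix ι ι K) * coordProj S = coordProj S := by
  rw [coordProj, diagonal_mul_diagonal]
  congr 1
  ext i
  by_cases hi : i ∈ S <;> simp [hi]

theorem coordProj_mul_mul_coordProj_eq_zero [Semiring K] {S : Set ι} {A : Matrix ι ι K}
    (hA : ∀ i ∈ S, ∀ j ∈ S, A i j = 0) : coordProj S * A * coordProj S = 0 := by
  ext i j
  rw [coordProj, mul_diagonal, diagonal_mul]
  by_cases hi : i ∈ S <;> by_cases hj : j ∈ S <;> simp [hi, hj, hA]

theorem coordProj_mul_diagonal_mul_coordProj [Semiring K] {S : Set ι} {d : ι → K}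
    (hd : ∀ i ∈ S, d i = 1) : coordProj S * diagonal d * coordProj S = coordProj S := by
  rw [coordProj, diagonal_mul_diagonal, diagonal_mul_diagonal]
  congr 1
  ext i
  by_cases hi : i ∈ S <;> simp [hi, hd]

theorem rank_coordProj [Field K] (S : Set ι) :
    (coordProj S : Matrix ι ι K).rank = Nat.card S := by
  classical
  rw [coordProj, rank_diagonal, Nat.card_eq_fintype_card]
  exact Fintype.card_congr <| Equiv.subtypeEquivRight fun i => by
    by_cases hi : i ∈ S <;> simp [hi]

theorem range_coordProj [Field K] (S : Set ι) :
    LinearMap.range (coordProj S : Matrix ι ι K).mulVecLin =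
      Submodule.span K ((fun i => Pi.single i 1) '' S) := by
  apply le_antisymm
  · rintro _ ⟨v, rfl⟩
    rw [mulVecLin_apply, pi_eq_sum_univ' (coordProj S *ᵥ v)]
    refine Submodule.sum_mem _ fun i _ => ?_
    by_cases hi : i ∈ S
    · exact Submodule.smul_mem _ _ (Submodule.subset_span ⟨i, hi, rfl⟩)
    · simp [coordProj, mulVec_diagonal, hi]
  · rw [Submodule.span_le]
    rintro _ ⟨i, hi, rfl⟩
    refine ⟨Pi.single i 1, ?_⟩
    ext k
    by_cases hk : k = i
    · subst hk
      simp [coordProj, hi]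
    · simp [coordProj, hk]

end Matrix

theorem hammingWt_eq_sum {n : ℕ} (j : Fin n → Fin 2) : hammingWt j = ∑ i, (j i).val := by
  rw [hammingWt, card_filter]
  refine sum_congr rfl fun i _ => ?_
  generalize j i = a
  fin_cases a <;> rfl

theorem hammingWt_eq_head_add_tail {n : ℕ} (j : Fin (n + 1) → Fin 2) :
    hammingWt j = (j 0).val + hammingWt (Fin.tail j) := by
  simp only [hammingWt_eq_sum, Fin.sum_univ_succ, Fin.tail]

def parityBit {n : ℕ} (t : Fin n → Fin 2) : Fin 2 :=
  if Even (hammingWt t) then 0 else 1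

theorem even_hammingWt_iff_head_eq_parityBit {n : ℕ} (j : Fin (n + 1) → Fin 2) :
    Even (hammingWt j) ↔ j 0 = parityBit (Fin.tail j) := by
  rw [hammingWt_eq_head_add_tail, parityBit]
  generalize j 0 = a
  by_cases ht : Even (hammingWt (Fin.tail j)) <;> fin_cases a <;>
    simp [ht, Nat.even_add]

def evenHammingWtEquiv (n : ℕ) :
    {j : Fin (n + 1) → Fin 2 // Even (hammingWt j)} ≃ (Fin n → Fin 2) where
  toFun j := Fin.tail j.1
  invFun t := ⟨Fin.cons (parityBit t) t, by simp [even_hammingWt_iff_head_eq_parityBit]⟩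
  left_inv := by
    rintro ⟨j, hj⟩
    apply Subtype.ext
    dsimp only
    rw [← (even_hammingWt_iff_head_eq_parityBit j).1 hj, Fin.cons_self_tail]
  right_inv _ := rfl

def evenHammingWtZeroHeadEquiv (n : ℕ) :
    {j : Fin (n + 1) → Fin 2 // j 0 = 0 ∧ Even (hammingWt j)} ≃
      {t : Fin n → Fin 2 // Even (hammingWt t)} where
  toFun j := ⟨Fin.tail j.1, by simpa [hammingWt_eq_head_add_tail, j.2.1] using j.2.2⟩
  invFun t := ⟨Fin.cons 0 t.1, by simpa [hammingWt_eq_head_add_tail] using t.2⟩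
  left_inv := by
    rintro ⟨j, h0, -⟩
    apply Subtype.ext
    dsimp only
    rw [← h0, Fin.cons_self_tail]
  right_inv _ := rfl

theorem card_zero_head_even_hammingWt {n : ℕ} (hn : 2 ≤ n) :
    Nat.card {j : Fin n → Fin 2 | j ⟨0, by omega⟩ = 0 ∧ Even (hammingWt j)} =
      2 ^ (n - 2) := by
  obtain ⟨m, rfl⟩ : ∃ m, n = m + 2 := ⟨n - 2, by omega⟩
  calc Nat.card {j : Fin (m + 2) → Fin 2 // j 0 = 0 ∧ Even (hammingWt j)}
      _ = Nat.card (Fin m → Fin 2) :=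
        Nat.card_congr ((evenHammingWtZeroHeadEquiv (m + 1)).trans (evenHammingWtEquiv m))
      _ = 2 ^ (m + 2 - 2) := by simp

theorem tpow_apply_eq_zero {A : Matrix (Fin 2) (Fin 2) ℂ} {n : ℕ} {j k : Fin n → Fin 2}
    (i : Fin n) (h : A (j i) (k i) = 0) : tpow A n j k = 0 :=
  prod_eq_zero (mem_univ i) h

theorem tpow_diagonal (d : Fin 2 → ℂ) (n : ℕ) :
    tpow (diagonal d) n = diagonal fun j => ∏ i, d (j i) := by
  ext j k
  by_cases hjk : j = k
  · subst hjk
    simp [tpow]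
  · obtain ⟨i, hi⟩ := Function.ne_iff.mp hjk
    rw [diagonal_apply_ne _ hjk]
    exact tpow_apply_eq_zero i (diagonal_apply_ne _ hi)

theorem tpow_sigmaZ (n : ℕ) : tpow sigmaZ n = diagonal fun j => (-1) ^ hammingWt j := by
  have hZ : sigmaZ = diagonal fun a => (-1) ^ a.val := by
    ext a b
    fin_cases a <;> fin_cases b <;> simp [sigmaZ]
  simp only [hZ, tpow_diagonal, hammingWt_eq_sum, prod_pow_eq_pow_sum]

theorem coordProj_mul_tpow_mul_coordProj_eq_zero {A : Matrix (Fin 2) (Fin 2) ℂ} {n : ℕ}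
    {S : Set (Fin n → Fin 2)} (i : Fin n) (hS : ∀ j ∈ S, j i = 0) (hA : A 0 0 = 0) :
    coordProj S * tpow A n * coordProj S = 0 :=
  coordProj_mul_mul_coordProj_eq_zero fun j hj k hk =>
    tpow_apply_eq_zero i (by rw [hS j hj, hS k hk, hA])

theorem jointRank_even_codim2 (n : ℕ) (hn : 4 ≤ n) :
    (∃ P : Matrix (Fin n → Fin 2) (Fin n → Fin 2) ℂ,
      P.IsHermitian ∧ P * P = P ∧ P.rank = 2 ^ (n - 2) ∧
      LinearMap.range P.mulVecLin =
        Submodule.span ℂ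
          ((fun j : Fin n → Fin 2 => (Pi.single j 1 : (Fin n → Fin 2) → ℂ)) ''
            {j | j ⟨0, by omega⟩ = 0 ∧ Even (hammingWt j)}) ∧
      P * tpow sigmaX n * P = 0 ∧ P * tpow sigmaY n * P = 0 ∧
      P * tpow sigmaZ n * P = P) ∧
    ((0 : ℂ), (0 : ℂ), (1 : ℂ)) ∈
      jointRank3 (2 ^ (n - 2)) (tpow sigmaX n) (tpow sigmaY n) (tpow sigmaZ n) := by
  set S : Set (Fin n → Fin 2) := {j | j ⟨0, by omega⟩ = 0 ∧ Even (hammingWt j)}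
  have hrank : (coordProj S : Matrix _ _ ℂ).rank = 2 ^ (n - 2) := by
    rw [rank_coordProj, card_zero_head_even_hammingWt (by omega)]
  have hX : coordProj S * tpow sigmaX n * coordProj S = 0 :=
    coordProj_mul_tpow_mul_coordProj_eq_zero _ (fun _ hj => hj.1) (by simp [sigmaX])
  have hY : coordProj S * tpow sigmaY n * coordProj S = 0 :=
    coordProj_mul_tpow_mul_coordProj_eq_zero _ (fun _ hj => hj.1) (by simp [sigmaY])
  have hZ : coordProj S * tpow sigmaZ n * coordProj S = coordProj S := by
    rw [tpow_sigmaZ]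
    exact coordProj_mul_diagonal_mul_coordProj fun _ hj => hj.2.neg_one_pow
  refine ⟨⟨coordProj S, coordProj_isHermitian S, coordProj_mul_self S, hrank, range_coordProj S,
    hX, hY, hZ⟩, coordProj S, coordProj_isHermitian S, coordProj_mul_self S, hrank, ?_, ?_, ?_⟩
  · rw [hX, zero_smul]
  · rw [hY, zero_smul]
  · rw [hZ, one_smul]
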